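/- In the q-Barbell graph (two unweighted q-cliques joined by a single bridge edge), if the French-DeGroot leaders s₀ and s₁ lie in the same clique and neither is a bridge endpoint, then P = 1/2 and D = q/2. -/

import Mathlib

open Matrix

noncomputable section

/-- Moore–Penrose pseudoinverse conditions. -/
def IsMoorePenrose {V : Type*} [Fintype V] [DecidableEq V]
    (L Lp : Matrix V V ℝ) : Prop :=
  L * Lp * L = L ∧ Lp * L * Lp = Lp ∧ (L * Lp)ᵀ = L * Lp ∧ (Lp * L)ᵀ = Lp * L

/-- Laplacian of a weighted graph given by weight function `w`. -/
def lapOf {V : Type*} [Fintype V] [DecidableEq V] (w : V → V → ℝ) : Matrix V V ℝ :=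
  Matrix.of fun i j => if i = j then ∑ k, w i k else - w i j

/-- The vector `e_u - e_v`. -/
def bvec {V : Type*} [DecidableEq V] (u v : V) : V → ℝ :=
  Pi.single u 1 - Pi.single v 1

/-- The all-ones matrix. -/
def onesM (V : Type*) [Fintype V] : Matrix V V ℝ := Matrix.of fun _ _ => 1

/-- Weight function of the `q`-Barbell graph: two unweighted complete graphs on
`Fin q ⊕ Fin q` joined by a single bridge edge between `astar` (left) and `bstar` (right). -/
def barbellW (q : ℕ) (astar bstar : Fin q) :
    (Fin q ⊕ Fin q) → (Fin q ⊕ Fin q) → ℝ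
  | Sum.inl i, Sum.inl j => if i = j then 0 else 1
  | Sum.inr i, Sum.inr j => if i = j then 0 else 1
  | Sum.inl i, Sum.inr j => if i = astar ∧ j = bstar then 1 else 0
  | Sum.inr i, Sum.inl j => if j = astar ∧ i = bstar then 1 else 0

/-!
The vector `b = e_{s₁} - e_{s₀}` is an eigenvector of the Laplacian with eigenvalue `q`: the two
leaders are adjacent twins of degree `q - 1` (they see the same vertices, the bridge ends at
neither). Since the Laplacian is symmetric, its Moore–Penrose inverse is symmetric and commutes
with it, so `L⁺ b = q⁻¹ b`. With `bᵀb = 2` this gives `bᵀL⁺b = 2/q` and `bᵀ(L⁺)²b = 2/q²`.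
-/

namespace IsMoorePenrose

variable {V : Type*} [Fintype V] [DecidableEq V] {L X Y : Matrix V V ℝ}

theorem eq (hX : IsMoorePenrose L X) (hY : IsMoorePenrose L Y) : X = Y := by
  obtain ⟨hX1, hX2, hX3, hX4⟩ := hX
  obtain ⟨hY1, hY2, hY3, hY4⟩ := hY
  have hLX : L * X = L * Y :=
    calc L * X = (L * Y) * (L * X) := by rw [← Matrix.mul_assoc (L * Y), hY1]
    _ = ((L * X) * (L * Y))ᵀ := by rw [Matrix.transpose_mul, hX3, hY3]
    _ = L * Y := by rw [← Matrix.mul_assoc, hX1, hY3]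
  have hXL : X * L = Y * L :=
    calc X * L = (X * L) * (Y * L) := by rw [Matrix.mul_assoc X, ← Matrix.mul_assoc L, hY1]
    _ = ((Y * L) * (X * L))ᵀ := by rw [Matrix.transpose_mul, hX4, hY4]
    _ = Y * L := by rw [Matrix.mul_assoc Y, ← Matrix.mul_assoc L, hX1, hY4]
  calc X = X * L * X := hX2.symm
  _ = Y * L * Y := by rw [Matrix.mul_assoc, hLX, ← Matrix.mul_assoc, hXL]
  _ = Y := hY2

theorem transpose (h : IsMoorePenrose L X) : IsMoorePenrose Lᵀ Xᵀ := by
  obtain ⟨h1, h2, h3, h4⟩ := h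
  refine ⟨?_, ?_, ?_, ?_⟩
  · rw [← Matrix.transpose_mul, ← Matrix.transpose_mul, ← Matrix.mul_assoc, h1]
  · rw [← Matrix.transpose_mul, ← Matrix.transpose_mul, ← Matrix.mul_assoc, h2]
  · rw [← Matrix.transpose_mul, h4, h4]
  · rw [← Matrix.transpose_mul, h3, h3]

theorem isSymm (hL : L.IsSymm) (h : IsMoorePenrose L X) : X.IsSymm :=
  (hL ▸ h.transpose).eq h

theorem mul_comm (hL : L.IsSymm) (h : IsMoorePenrose L X) : X * L = L * X := by
  rw [← h.2.2.2, Matrix.transpose_mul, hL, h.isSymm hL]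

theorem mulVec_eq_inv_smul (hL : L.IsSymm) (h : IsMoorePenrose L X) {b : V → ℝ} {c : ℝ}
    (hc : c ≠ 0) (hb : L *ᵥ b = c • b) : X *ᵥ b = c⁻¹ • b := by
  have hb' : b = L *ᵥ (c⁻¹ • b) := by rw [mulVec_smul, hb, inv_smul_smul₀ hc]
  have hLXb : (L * X) *ᵥ b = b := by
    conv_lhs => rw [hb']
    rw [mulVec_mulVec, h.1, ← hb']
  calc X *ᵥ b = c⁻¹ • (X *ᵥ (c • b)) := by rw [mulVec_smul, inv_smul_smul₀ hc]
  _ = c⁻¹ • b := by rw [← hb, mulVec_mulVec, h.mul_comm hL, hLXb]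

end IsMoorePenrose

section Laplacian

variable {V : Type*} [Fintype V] [DecidableEq V]

theorem lapOf_isSymm {w : V → V → ℝ} (hw : ∀ i j, w i j = w j i) : (lapOf w).IsSymm := by
  ext i j
  rcases eq_or_ne i j with rfl | h
  · rfl
  · simp [lapOf, h, Ne.symm h, hw i j]

theorem bvec_dotProduct_self {u v : V} (huv : u ≠ v) : bvec u v ⬝ᵥ bvec u v = 2 := by
  simp only [bvec, sub_dotProduct, dotProduct_sub, single_dotProduct, Pi.single_apply,
    if_neg huv, if_neg huv.symm]
  norm_num

theorem lapOf_mulVec_bvec_of_twins {w : V → V → ℝ} {u v : V} (huv : u ≠ v) {d : ℝ}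
    (hsymm : w v u = w u v) (htwin : ∀ k, k ≠ u → k ≠ v → w k u = w k v)
    (hdu : ∑ k, w u k = d) (hdv : ∑ k, w v k = d) :
    lapOf w *ᵥ bvec u v = (d + w u v) • bvec u v := by
  ext i
  simp only [bvec, mulVec_sub, mulVec_single, Pi.sub_apply, Pi.smul_apply,
    smul_eq_mul, Pi.single_apply, lapOf]
  by_cases hiu : i = u
  · subst hiu; simp [huv, hdu]
  by_cases hiv : i = v
  · subst hiv; simp [huv.symm, hdv, hsymm, sub_eq_add_neg]
  simp [hiu, hiv, htwin i hiu hiv]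

end Laplacian

section Barbell

variable {q : ℕ} {astar bstar : Fin q}

theorem barbellW_symm (i j : Fin q ⊕ Fin q) :
    barbellW q astar bstar i j = barbellW q astar bstar j i := by
  cases i <;> cases j <;> simp [barbellW, eq_comm]

theorem barbellW_degree_inl {i : Fin q} (hi : i ≠ astar) :
    ∑ k, barbellW q astar bstar (Sum.inl i) k = q - 1 := by
  simp [Fintype.sum_sum_type, barbellW, hi, Finset.sum_ite, Finset.filter_ne,
    Nat.cast_pred i.pos]

theorem barbellW_twins {i j : Fin q} (hi : i ≠ astar) (hj : j ≠ astar) (k : Fin q ⊕ Fin q)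
    (hki : k ≠ Sum.inl i) (hkj : k ≠ Sum.inl j) :
    barbellW q astar bstar k (Sum.inl i) = barbellW q astar bstar k (Sum.inl j) := by
  rcases k with k | k
  · simp_all [barbellW]
  · simp [barbellW, hi, hj]

theorem lapOf_barbellW_mulVec_bvec {s0 s1 : Fin q} (hs : s0 ≠ s1) (hs0 : s0 ≠ astar)
    (hs1 : s1 ≠ astar) :
    lapOf (barbellW q astar bstar) *ᵥ bvec (Sum.inl s1) (Sum.inl s0) =
      (q : ℝ) • bvec (Sum.inl s1) (Sum.inl s0) := by
  rw [lapOf_mulVec_bvec_of_twins (by simpa using hs.symm) (barbellW_symm _ _)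
    (barbellW_twins hs1 hs0) (barbellW_degree_inl hs1) (barbellW_degree_inl hs0)]
  simp [barbellW, hs.symm]

end Barbell

theorem barbell_same_clique {q : ℕ} (astar bstar : Fin q)
    (s0 s1 : Fin q) (hs : s0 ≠ s1) (hs0 : s0 ≠ astar) (hs1 : s1 ≠ astar)
    (L Lp : Matrix (Fin q ⊕ Fin q) (Fin q ⊕ Fin q) ℝ)
    (hL : L = lapOf (barbellW q astar bstar))
    (hMP : IsMoorePenrose L Lp) :
    (bvec (Sum.inl s1 : Fin q ⊕ Fin q) (Sum.inl s0) ⬝ᵥ (Lp * Lp) *ᵥ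
          bvec (Sum.inl s1 : Fin q ⊕ Fin q) (Sum.inl s0)) /
        (bvec (Sum.inl s1 : Fin q ⊕ Fin q) (Sum.inl s0) ⬝ᵥ Lp *ᵥ
          bvec (Sum.inl s1 : Fin q ⊕ Fin q) (Sum.inl s0)) ^ 2 = 1 / 2 ∧
      1 / (bvec (Sum.inl s1 : Fin q ⊕ Fin q) (Sum.inl s0) ⬝ᵥ Lp *ᵥ
          bvec (Sum.inl s1 : Fin q ⊕ Fin q) (Sum.inl s0)) = (q : ℝ) / 2 := by
  set b := bvec (Sum.inl s1 : Fin q ⊕ Fin q) (Sum.inl s0)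
  have hq : (q : ℝ) ≠ 0 := Nat.cast_ne_zero.mpr s0.pos.ne'
  have hLsymm : L.IsSymm := hL ▸ lapOf_isSymm barbellW_symm
  have hLb : L *ᵥ b = (q : ℝ) • b := hL ▸ lapOf_barbellW_mulVec_bvec hs hs0 hs1
  have hLpb : Lp *ᵥ b = (q : ℝ)⁻¹ • b := hMP.mulVec_eq_inv_smul hLsymm hq hLb
  have hbb : b ⬝ᵥ b = 2 := bvec_dotProduct_self (by simpa using hs.symm)
  have hresistance : b ⬝ᵥ Lp *ᵥ b = 2 / q := by
    rw [hLpb, dotProduct_smul, hbb, smul_eq_mul, inv_mul_eq_div]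
  have hsq : b ⬝ᵥ (Lp * Lp) *ᵥ b = 2 / q ^ 2 := by
    rw [← mulVec_mulVec, hLpb, mulVec_smul, hLpb, smul_smul, dotProduct_smul, hbb,
      smul_eq_mul]
    field_simp
  rw [hresistance, hsq]
  constructor <;> field_simp
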